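/- For every CGS G, every BSL state formula φ, every assignment χ for φ, and every state q: G, χ, q ⊨_BSL φ if and only if G, χ, q ⊨_SL tr_{Ag ∖ dom(χ)}(φ). -/

import Mathlib

/-- A concurrent game structure: transition function, initial state, valuation. -/
structure CGS (S Ag Act AP : Type) where
  δ : S → (Ag → Act) → S
  init : S
  val : S → AP → Prop

variable {S Ag Act AP Var : Type}

/-- An initial (finite) path: a start state together with the list of decisions taken. -/
abbrev FPath (S Ag Act : Type) := S × List (Ag → Act)

/-- Last state of an initial path. -/
def CGS.lastState (G : CGS S Ag Act AP) (ρ : FPath S Ag Act) : S :=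
  ρ.2.foldl G.δ ρ.1

/-- A strategy assigns an action to every initial path. -/
abbrev Strat (S Ag Act : Type) := FPath S Ag Act → Act

/-- Concatenation of initial paths (meaningful when `G.lastState ρ = ρ'.1`,
i.e. they are glued at the shared state). -/
def FPath.concat (ρ ρ' : FPath S Ag Act) : FPath S Ag Act := (ρ.1, ρ.2 ++ ρ'.2)

/-- The finite prefix with `n` decisions of the play from `q` whose decision stream is `d`. -/
def prefixPath (q : S) (d : ℕ → Ag → Act) (n : ℕ) : FPath S Ag Act :=
  (q, List.ofFn fun i : Fin n => d i)

/-- The state reached after `i` steps of the play from `q` with decision stream `d`. -/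
def stateAt (G : CGS S Ag Act AP) (q : S) (d : ℕ → Ag → Act) (i : ℕ) : S :=
  G.lastState (prefixPath q d i)

/-- An assignment: a partial map from agents and variables to strategies. -/
abbrev Assign (S Ag Act Var : Type) := Ag ⊕ Var → Option (Strat S Ag Act)

/-- The outcome of an assignment from a state: the set of plays (identified with
their decision streams) compatible with all strategies assigned to agents. -/
def outcome (G : CGS S Ag Act AP) (q : S) (χ : Assign S Ag Act Var) :
    Set (ℕ → Ag → Act) :=
  {d | ∀ (k : ℕ) (a : Ag) (σ : Strat S Ag Act),
      χ (Sum.inl a) = some σ → d k a = σ (prefixPath q d k)}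

/-- The `ρ`-translation of a strategy. -/
def transStrat [DecidableEq S] (G : CGS S Ag Act AP) (ρ : FPath S Ag Act)
    (σ : Strat S Ag Act) : Strat S Ag Act :=
  fun ρ' => if ρ'.1 = G.lastState ρ then σ (ρ.concat ρ') else σ ρ'

/-- The `ρ`-translation of an assignment. -/
def transAssign [DecidableEq S] (G : CGS S Ag Act AP) (ρ : FPath S Ag Act)
    (χ : Assign S Ag Act Var) : Assign S Ag Act Var :=
  fun l => (χ l).map (transStrat G ρ)

/-- Syntax of Strategy Logic (SL). -/
inductive SLForm (AP Ag Var : Type) : Type where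
  | atom : AP → SLForm AP Ag Var
  | neg  : SLForm AP Ag Var → SLForm AP Ag Var
  | or   : SLForm AP Ag Var → SLForm AP Ag Var → SLForm AP Ag Var
  | next : SLForm AP Ag Var → SLForm AP Ag Var
  | untl : SLForm AP Ag Var → SLForm AP Ag Var → SLForm AP Ag Var
  | exi  : Var → SLForm AP Ag Var → SLForm AP Ag Var
  | bind : Ag → Var → SLForm AP Ag Var → SLForm AP Ag Var

mutual
/-- State formulas of Branching-time Strategy Logic (BSL). -/
inductive BSLForm (AP Ag Var : Type) : Type where
  | atom : AP → BSLForm AP Ag Var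
  | neg  : BSLForm AP Ag Var → BSLForm AP Ag Var
  | or   : BSLForm AP Ag Var → BSLForm AP Ag Var → BSLForm AP Ag Var
  | exi  : Var → BSLForm AP Ag Var → BSLForm AP Ag Var
  | bind : Ag → Var → BSLForm AP Ag Var → BSLForm AP Ag Var
  | unbind : Ag → BSLForm AP Ag Var → BSLForm AP Ag Var
  | pathE : BSLPath AP Ag Var → BSLForm AP Ag Var
/-- Path formulas of BSL. -/
inductive BSLPath (AP Ag Var : Type) : Type where
  | state : BSLForm AP Ag Var → BSLPath AP Ag Var
  | neg   : BSLPath AP Ag Var → BSLPath AP Ag Var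
  | or    : BSLPath AP Ag Var → BSLPath AP Ag Var → BSLPath AP Ag Var
  | next  : BSLPath AP Ag Var → BSLPath AP Ag Var
  | untl  : BSLPath AP Ag Var → BSLPath AP Ag Var → BSLPath AP Ag Var
end

/-- Semantics of SL. Temporal operators are evaluated on an outcome play of the
current assignment (for complete assignments — the only case where the SL
semantics is defined — this play is unique), with the assignment translated
along the play. -/
def SLsat [DecidableEq S] [DecidableEq Ag] [DecidableEq Var] (G : CGS S Ag Act AP) :
    Assign S Ag Act Var → S → SLForm AP Ag Var → Prop
  | χ, q, .atom p => G.val q p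
  | χ, q, .neg φ => ¬ SLsat G χ q φ
  | χ, q, .or φ φ' => SLsat G χ q φ ∨ SLsat G χ q φ'
  | χ, q, .exi x φ =>
      ∃ σ : Strat S Ag Act, SLsat G (Function.update χ (Sum.inr x) (some σ)) q φ
  | χ, q, .bind a x φ => SLsat G (Function.update χ (Sum.inl a) (χ (Sum.inr x))) q φ
  | χ, q, .next φ => ∃ d ∈ outcome G q χ,
      SLsat G (transAssign G (prefixPath q d 1) χ) (stateAt G q d 1) φ
  | χ, q, .untl φ φ' => ∃ d ∈ outcome G q χ, ∃ j : ℕ,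
      SLsat G (transAssign G (prefixPath q d j) χ) (stateAt G q d j) φ' ∧
      ∀ k < j, SLsat G (transAssign G (prefixPath q d k) χ) (stateAt G q d k) φ

mutual
/-- Semantics of BSL state formulas, at a state under an assignment. -/
def BSLsat [DecidableEq S] [DecidableEq Ag] [DecidableEq Var] (G : CGS S Ag Act AP)
    (χ : Assign S Ag Act Var) (q : S) : BSLForm AP Ag Var → Prop
  | .atom p => G.val q p
  | .neg φ => ¬ BSLsat G χ q φ
  | .or φ φ' => BSLsat G χ q φ ∨ BSLsat G χ q φ'
  | .exi x φ =>
      ∃ σ : Strat S Ag Act, BSLsat G (Function.update χ (Sum.inr x) (some σ)) q φ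
  | .bind a x φ => BSLsat G (Function.update χ (Sum.inl a) (χ (Sum.inr x))) q φ
  | .unbind a φ => BSLsat G (Function.update χ (Sum.inl a) none) q φ
  | .pathE ψ => ∃ d ∈ outcome G q χ, BSLsatP G χ q d 0 ψ

/-- Semantics of BSL path formulas, on the play from `q` with decision stream
`d`, at position `i`; the assignment is translated by the prefix as state
formulas are evaluated. -/
def BSLsatP [DecidableEq S] [DecidableEq Ag] [DecidableEq Var] (G : CGS S Ag Act AP)
    (χ : Assign S Ag Act Var) (q : S) (d : ℕ → Ag → Act) (i : ℕ) :
    BSLPath AP Ag Var → Prop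
  | .state φ => BSLsat G (transAssign G (prefixPath q d i) χ) (stateAt G q d i) φ
  | .neg ψ => ¬ BSLsatP G χ q d i ψ
  | .or ψ ψ' => BSLsatP G χ q d i ψ ∨ BSLsatP G χ q d i ψ'
  | .next ψ => BSLsatP G χ q d (i + 1) ψ
  | .untl ψ ψ' => ∃ j, i ≤ j ∧ BSLsatP G χ q d j ψ' ∧
      ∀ k, i ≤ k → k < j → BSLsatP G χ q d k ψ
end

/-- Free variables of an SL formula. -/
def SLfree : SLForm AP Ag Var → Set Var
  | .atom _ => ∅
  | .neg φ => SLfree φ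
  | .or φ φ' => SLfree φ ∪ SLfree φ'
  | .next φ => SLfree φ
  | .untl φ φ' => SLfree φ ∪ SLfree φ'
  | .exi x φ => SLfree φ \ {x}
  | .bind _ x φ => insert x (SLfree φ)

mutual
/-- Free variables of a BSL state formula. -/
def BSLfree : BSLForm AP Ag Var → Set Var
  | .atom _ => ∅
  | .neg φ => BSLfree φ
  | .or φ φ' => BSLfree φ ∪ BSLfree φ'
  | .exi x φ => BSLfree φ \ {x}
  | .bind _ x φ => insert x (BSLfree φ)
  | .unbind _ φ => BSLfree φ
  | .pathE ψ => BSLfreeP ψ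
/-- Free variables of a BSL path formula. -/
def BSLfreeP : BSLPath AP Ag Var → Set Var
  | .state φ => BSLfree φ
  | .neg ψ => BSLfreeP ψ
  | .or ψ ψ' => BSLfreeP ψ ∪ BSLfreeP ψ'
  | .next ψ => BSLfreeP ψ
  | .untl ψ ψ' => BSLfreeP ψ ∪ BSLfreeP ψ'
end

/-- `SLdefFor A φ` holds when the SL semantics of `φ` is defined in every
assignment whose agent-domain is `A`: every temporal operator is only
evaluated under a complete assignment (every agent being bound on the way). -/
def SLdefFor (A : Set Ag) : SLForm AP Ag Var → Prop
  | .atom _ => True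
  | .neg φ => SLdefFor A φ
  | .or φ φ' => SLdefFor A φ ∧ SLdefFor A φ'
  | .exi _ φ => SLdefFor A φ
  | .bind a _ φ => SLdefFor (insert a A) φ
  | .next φ => A = Set.univ ∧ SLdefFor A φ
  | .untl φ φ' => A = Set.univ ∧ SLdefFor A φ ∧ SLdefFor A φ'

/-- The translation `tr : SL → BSL`, inserting a path quantifier in front of
each temporal operator and homomorphic elsewhere. -/
def tr : SLForm AP Ag Var → BSLForm AP Ag Var
  | .atom p => .atom p
  | .neg φ => .neg (tr φ)
  | .or φ φ' => .or (tr φ) (tr φ')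
  | .next φ => .pathE (.next (.state (tr φ)))
  | .untl φ φ' => .pathE (.untl (.state (tr φ)) (.state (tr φ')))
  | .exi x φ => .exi x (tr φ)
  | .bind a x φ => .bind a x (tr φ)

mutual
/-- `φ` avoids the fresh variables (those of the form `Sum.inr a`) used by the
translation `tr_A`. -/
def BSLavoidsFresh : BSLForm AP Ag (Var ⊕ Ag) → Prop
  | .atom _ => True
  | .neg φ => BSLavoidsFresh φ
  | .or φ φ' => BSLavoidsFresh φ ∧ BSLavoidsFresh φ'
  | .exi x φ => x.isLeft ∧ BSLavoidsFresh φ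
  | .bind _ x φ => x.isLeft ∧ BSLavoidsFresh φ
  | .unbind _ φ => BSLavoidsFresh φ
  | .pathE ψ => BSLavoidsFreshP ψ
def BSLavoidsFreshP : BSLPath AP Ag (Var ⊕ Ag) → Prop
  | .state φ => BSLavoidsFresh φ
  | .neg ψ => BSLavoidsFreshP ψ
  | .or ψ ψ' => BSLavoidsFreshP ψ ∧ BSLavoidsFreshP ψ'
  | .next ψ => BSLavoidsFreshP ψ
  | .untl ψ ψ' => BSLavoidsFreshP ψ ∧ BSLavoidsFreshP ψ'
end

/-- Prefix a formula with the bindings `(a, x_a)` for all agents `a` in `l`. -/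
def bindList (l : List Ag) (φ : SLForm AP Ag (Var ⊕ Ag)) : SLForm AP Ag (Var ⊕ Ag) :=
  l.foldr (fun a ψ => .bind a (Sum.inr a) ψ) φ

/-- Prefix a formula with the strategy quantifications `⟨⟨x_a⟩⟩` for `a ∈ l`. -/
def quantList (l : List Ag) (φ : SLForm AP Ag (Var ⊕ Ag)) : SLForm AP Ag (Var ⊕ Ag) :=
  l.foldr (fun a ψ => .exi (Sum.inr a) ψ) φ

noncomputable section

mutual
/-- The translation `tr_A : BSL → SL`, parameterized by the set `A` of
currently unbound agents; each fresh variable for agent `a` is `Sum.inr a`. -/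
def trA [DecidableEq Ag] (A : Finset Ag) :
    BSLForm AP Ag (Var ⊕ Ag) → SLForm AP Ag (Var ⊕ Ag)
  | .atom p => .atom p
  | .neg φ => .neg (trA A φ)
  | .or φ φ' => .or (trA A φ) (trA A φ')
  | .exi x φ => .exi x (trA A φ)
  | .bind a x φ => .bind a x (trA (A.erase a) φ)
  | .unbind a φ => trA (insert a A) φ
  | .pathE ψ => quantList A.toList (bindList A.toList (trAP A ψ))
/-- The homomorphic extension of `tr_A` to BSL path formulas. -/
def trAP [DecidableEq Ag] (A : Finset Ag) :
    BSLPath AP Ag (Var ⊕ Ag) → SLForm AP Ag (Var ⊕ Ag)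
  | .state φ => trA A φ
  | .neg ψ => .neg (trAP A ψ)
  | .or ψ ψ' => .or (trAP A ψ) (trAP A ψ')
  | .next ψ => .next (trAP A ψ)
  | .untl ψ ψ' => .untl (trAP A ψ) (trAP A ψ')
end
end

/-!
Induction on BSL formulas. For path formulas the claim is generalised: along an outcome `d` of a
completion `χ'` of `χ` (an assignment binding every agent, agreeing with `χ` on the agents `χ`
binds and on the ordinary variables), a path formula under `χ` is equivalent to its translation
under `χ'`. Three facts make this work. A complete assignment has exactly one outcome, so the
existential temporal operators of SL just follow `d`. The SL semantics at `q` sees an assignment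
only on histories from `q`, so translating along `i` and then `j` more steps is as good as
translating along `i + j` steps. And `tr_A φ` is insensitive to the strategies of the agents in
`A`, so state subformulas may be evaluated under `χ'` instead of `χ`.

For `E ψ`, an outcome `d` of `χ` is the outcome of the completion in which the unbound agents
replay `d`, and conversely the unique outcome of any completion chosen by the SL quantifiers over
the fresh variables is an outcome of `χ`.
-/

section Paths

@[simp]
lemma prefixPath_fst (q : S) (d : ℕ → Ag → Act) (n : ℕ) : (prefixPath q d n).1 = q := rfl

@[simp]
lemma prefixPath_zero (q : S) (d : ℕ → Ag → Act) : prefixPath q d 0 = (q, []) := by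
  simp [prefixPath]

@[simp]
lemma prefixPath_length (q : S) (d : ℕ → Ag → Act) (n : ℕ) : (prefixPath q d n).2.length = n := by
  simp [prefixPath]

lemma prefixPath_congr (q : S) {d d' : ℕ → Ag → Act} {n : ℕ} (h : ∀ k < n, d k = d' k) :
    prefixPath q d n = prefixPath q d' n := by
  simp only [prefixPath, Prod.mk.injEq, List.ofFn_inj, true_and]
  exact funext fun k => h k k.2

lemma prefixPath_concat (q q' : S) (d : ℕ → Ag → Act) (i j : ℕ) :
    (prefixPath q d i).concat (prefixPath q' (fun k => d (i + k)) j) = prefixPath q d (i + j) := by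
  simp [FPath.concat, prefixPath, List.ofFn_add]

variable (G : CGS S Ag Act AP)

lemma CGS.lastState_concat {ρ ρ' : FPath S Ag Act} (h : ρ'.1 = G.lastState ρ) :
    G.lastState (ρ.concat ρ') = G.lastState ρ' := by
  simp only [CGS.lastState, FPath.concat, List.foldl_append]
  rw [h]
  rfl

@[simp]
lemma stateAt_zero (q : S) (d : ℕ → Ag → Act) : stateAt G q d 0 = q := by
  simp [stateAt, CGS.lastState]

lemma stateAt_add (q : S) (d : ℕ → Ag → Act) (i j : ℕ) :
    stateAt G (stateAt G q d i) (fun k => d (i + k)) j = stateAt G q d (i + j) := by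
  simp only [stateAt]
  rw [← prefixPath_concat q (G.lastState (prefixPath q d i)) d i j, G.lastState_concat rfl]

variable [DecidableEq S]

@[simp]
lemma transAssign_nil (q : S) (χ : Assign S Ag Act Var) : transAssign G (q, []) χ = χ := by
  have : transStrat G (q, []) = id := by
    funext σ ⟨q', l⟩
    by_cases h : q' = q
    · subst h; simp [transStrat, CGS.lastState, FPath.concat]
    · simp [transStrat, CGS.lastState, h]
  funext l
  simp only [transAssign, this, Option.map_id, id]

@[simp]
lemma transAssign_isSome (ρ : FPath S Ag Act) (χ : Assign S Ag Act Var) (l : Ag ⊕ Var) :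
    (transAssign G ρ χ l).isSome = (χ l).isSome := by
  simp [transAssign]

end Paths

section Outcomes

variable (G : CGS S Ag Act AP)

def Assign.IsComplete (χ : Assign S Ag Act Var) : Prop := ∀ a, (χ (Sum.inl a)).isSome

lemma outcome_subsingleton {χ : Assign S Ag Act Var} (hχ : χ.IsComplete) (q : S) :
    (outcome G q χ).Subsingleton := by
  intro d hd d' hd'
  funext k
  induction k using Nat.strong_induction_on with
  | _ k ih =>
    funext a
    obtain ⟨σ, hσ⟩ := Option.isSome_iff_exists.mp (hχ a)
    rw [hd k a σ hσ, hd' k a σ hσ, prefixPath_congr q ih]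

lemma outcome_nonempty {χ : Assign S Ag Act Var} (hχ : χ.IsComplete) (q : S) :
    (outcome G q χ).Nonempty := by
  let next (l : List (Ag → Act)) : Ag → Act := fun a => (χ (Sum.inl a)).get (hχ a) (q, l)
  let history : ℕ → List (Ag → Act) := fun k => Nat.rec [] (fun _ l => l ++ [next l]) k
  have hprefix : ∀ k, prefixPath q (fun k => next (history k)) k = (q, history k) := by
    intro k
    induction k with
    | zero => simp [history]
    | succ k ih =>
      simp only [prefixPath, Prod.mk.injEq, List.ofFn_succ', true_and] at ih ⊢
      simp [ih, history]
  refine ⟨fun k => next (history k), fun k a σ hσ => ?_⟩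
  simp [hprefix, next, Option.get_of_eq_some _ hσ]

variable [DecidableEq S]

lemma mem_outcome_transAssign {χ : Assign S Ag Act Var} {q : S}
    {d : ℕ → Ag → Act} (hd : d ∈ outcome G q χ) (i : ℕ) :
    (fun k => d (i + k)) ∈ outcome G (stateAt G q d i) (transAssign G (prefixPath q d i) χ) := by
  intro k a σ' hσ'
  obtain ⟨σ, hσ, rfl⟩ := Option.map_eq_some_iff.mp hσ'
  simp only [hd (i + k) a σ hσ, transStrat, prefixPath_fst, stateAt, if_true,
    prefixPath_concat]

lemma exists_mem_outcome_transAssign_iff {χ : Assign S Ag Act Var} (hχ : χ.IsComplete) {q : S}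
    {d : ℕ → Ag → Act} (hd : d ∈ outcome G q χ) (i : ℕ) {P : (ℕ → Ag → Act) → Prop} :
    (∃ d' ∈ outcome G (stateAt G q d i) (transAssign G (prefixPath q d i) χ), P d') ↔
      P fun k => d (i + k) := by
  have hd' := mem_outcome_transAssign G hd i
  have hχ' : (transAssign G (prefixPath q d i) χ).IsComplete := fun a => by simpa using hχ a
  exact ⟨fun ⟨d', hd'', hP⟩ => outcome_subsingleton G hχ' _ hd'' hd' ▸ hP, fun hP => ⟨_, hd', hP⟩⟩

end Outcomes

section Restriction

variable (G : CGS S Ag Act AP)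

/-- Translated assignments compose only up to this restriction
(`restrictAt_transAssign_transAssign`), and it is all the SL semantics at `q` observes
(`SLsat_congr`). -/
def restrictAt (q : S) (χ : Assign S Ag Act Var) : Ag ⊕ Var → Option (List (Ag → Act) → Act) :=
  fun l => (χ l).map fun σ tl => σ (q, tl)

lemma restrictAt_update [DecidableEq Ag] [DecidableEq Var] (q : S) (χ : Assign S Ag Act Var)
    (l : Ag ⊕ Var) (v : Option (Strat S Ag Act)) :
    restrictAt q (Function.update χ l v) = Function.update (restrictAt q χ) l
      (v.map fun σ tl => σ (q, tl)) := by
  funext l'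
  by_cases h : l' = l
  · subst h; simp [restrictAt]
  · simp [restrictAt, h]

lemma outcome_subset_of_restrictAt_eq {q : S} {χ χ' : Assign S Ag Act Var}
    (h : ∀ a, restrictAt q χ (Sum.inl a) = restrictAt q χ' (Sum.inl a)) :
    outcome G q χ ⊆ outcome G q χ' := by
  intro d hd k a σ' hσ'
  have ha := h a
  rw [restrictAt, restrictAt, hσ', Option.map_some, Option.map_eq_some_iff] at ha
  obtain ⟨σ, hσ, hσσ'⟩ := ha
  rw [hd k a σ hσ]
  exact congrFun hσσ' (prefixPath q d k).2

lemma outcome_congr {q : S} {χ χ' : Assign S Ag Act Var}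
    (h : ∀ a, restrictAt q χ (Sum.inl a) = restrictAt q χ' (Sum.inl a)) :
    outcome G q χ = outcome G q χ' :=
  (outcome_subset_of_restrictAt_eq G h).antisymm
    (outcome_subset_of_restrictAt_eq G fun a => (h a).symm)

variable [DecidableEq S]

lemma restrictAt_transAssign (ρ : FPath S Ag Act) (χ : Assign S Ag Act Var) (l : Ag ⊕ Var) :
    restrictAt (G.lastState ρ) (transAssign G ρ χ) l
      = (restrictAt ρ.1 χ l).map fun g tl => g (ρ.2 ++ tl) := by
  simp only [restrictAt, transAssign, Option.map_map]
  congr 1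
  funext σ tl
  simp [transStrat, FPath.concat]

lemma restrictAt_transAssign_transAssign {ρ ρ' : FPath S Ag Act} (h : ρ'.1 = G.lastState ρ)
    (χ : Assign S Ag Act Var) :
    restrictAt (G.lastState ρ') (transAssign G ρ' (transAssign G ρ χ))
      = restrictAt (G.lastState (ρ.concat ρ')) (transAssign G (ρ.concat ρ') χ) := by
  funext l
  rw [restrictAt_transAssign, h, restrictAt_transAssign, restrictAt_transAssign, Option.map_map]
  simp [FPath.concat, Function.comp_def]

lemma restrictAt_transAssign_congr {q : S} {χ χ' : Assign S Ag Act Var} {l : Ag ⊕ Var}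
    (h : restrictAt q χ l = restrictAt q χ' l) (d : ℕ → Ag → Act) (i : ℕ) :
    restrictAt (stateAt G q d i) (transAssign G (prefixPath q d i) χ) l
      = restrictAt (stateAt G q d i) (transAssign G (prefixPath q d i) χ') l := by
  rw [stateAt, restrictAt_transAssign, restrictAt_transAssign, prefixPath_fst, h]

end Restriction

section Congruence

variable [DecidableEq S] [DecidableEq Ag] [DecidableEq Var] (G : CGS S Ag Act AP)

theorem SLsat_congr (φ : SLForm AP Ag Var) {χ χ' : Assign S Ag Act Var} {q : S}
    (hA : ∀ a, restrictAt q χ (Sum.inl a) = restrictAt q χ' (Sum.inl a))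
    (hV : ∀ x ∈ SLfree φ, restrictAt q χ (Sum.inr x) = restrictAt q χ' (Sum.inr x)) :
    SLsat G χ q φ ↔ SLsat G χ' q φ := by
  induction φ generalizing χ χ' q with
  | atom p => rfl
  | neg φ ih => exact not_congr (ih hA hV)
  | or φ φ' ih ih' =>
    exact or_congr (ih hA fun x hx => hV x (.inl hx)) (ih' hA fun x hx => hV x (.inr hx))
  | exi x φ ih =>
    refine exists_congr fun σ => ih (fun a => ?_) (fun y hy => ?_)
    · simp [restrictAt_update, hA a]
    · by_cases hyx : y = x
      · simp [restrictAt_update, hyx]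
      · simp [restrictAt_update, hyx, hV y ⟨hy, hyx⟩]
  | bind a x φ ih =>
    refine ih (fun b => ?_) (fun y hy => ?_)
    · by_cases hba : b = a
      · have hx := hV x (Set.mem_insert x _)
        simp only [restrictAt] at hx
        simp [restrictAt_update, hba, hx]
      · simp [restrictAt_update, hba, hA b]
    · simp [restrictAt_update, hV y (Set.mem_insert_of_mem x hy)]
  | next φ ih =>
    refine exists_congr fun d => ?_
    rw [outcome_congr G hA]
    refine and_congr_right fun _ => ih (fun a => ?_) (fun y hy => ?_)
    · exact restrictAt_transAssign_congr G (hA a) d 1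
    · exact restrictAt_transAssign_congr G (hV y hy) d 1
  | untl φ φ' ih ih' =>
    refine exists_congr fun d => ?_
    rw [outcome_congr G hA]
    refine and_congr_right fun _ => exists_congr fun j => and_congr ?_ ?_
    · exact ih' (fun a => restrictAt_transAssign_congr G (hA a) d j)
        (fun y hy => restrictAt_transAssign_congr G (hV y (.inr hy)) d j)
    · exact forall₂_congr fun k _ => ih (fun a => restrictAt_transAssign_congr G (hA a) d k)
        (fun y hy => restrictAt_transAssign_congr G (hV y (.inl hy)) d k)

lemma SLsat_congr_of_eq {φ : SLForm AP Ag Var} {χ χ' : Assign S Ag Act Var} (q : S)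
    (hA : ∀ a, χ (Sum.inl a) = χ' (Sum.inl a))
    (hV : ∀ x ∈ SLfree φ, χ (Sum.inr x) = χ' (Sum.inr x)) :
    SLsat G χ q φ ↔ SLsat G χ' q φ :=
  SLsat_congr G φ (fun a => by rw [restrictAt, hA a]; rfl)
    (fun x hx => by rw [restrictAt, hV x hx]; rfl)

lemma SLsat_transAssign_shift (φ : SLForm AP Ag Var) (χ : Assign S Ag Act Var) (q : S)
    (d : ℕ → Ag → Act) (i j : ℕ) :
    SLsat G (transAssign G (prefixPath (stateAt G q d i) (fun k => d (i + k)) j)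
        (transAssign G (prefixPath q d i) χ)) (stateAt G (stateAt G q d i) (fun k => d (i + k)) j) φ
      ↔ SLsat G (transAssign G (prefixPath q d (i + j)) χ) (stateAt G q d (i + j)) φ := by
  have h := restrictAt_transAssign_transAssign G (ρ := prefixPath q d i)
    (ρ' := prefixPath (stateAt G q d i) (fun k => d (i + k)) j) rfl χ
  rw [prefixPath_concat, ← stateAt, stateAt_add] at h
  rw [stateAt_add]
  exact SLsat_congr G φ (fun a => congrFun h _) (fun x _ => congrFun h _)

end Congruence

section FreshVariables

lemma SLfree_bindList (l : List Ag) (θ : SLForm AP Ag (Var ⊕ Ag)) :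
    SLfree (bindList l θ) ⊆ {x | ∃ a ∈ l, x = .inr a} ∪ SLfree θ := by
  induction l with
  | nil => simp [bindList]
  | cons a l ih =>
    rintro x (rfl | hx)
    · exact .inl ⟨a, List.mem_cons_self, rfl⟩
    · rcases ih hx with ⟨b, hb, rfl⟩ | hx
      · exact .inl ⟨b, List.mem_cons_of_mem a hb, rfl⟩
      · exact .inr hx

lemma SLfree_quantList (l : List Ag) (θ : SLForm AP Ag (Var ⊕ Ag)) :
    SLfree (quantList l θ) = SLfree θ \ {x | ∃ a ∈ l, x = .inr a} := by
  induction l with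
  | nil => simp [quantList]
  | cons a l ih =>
    change SLfree (quantList l θ) \ {.inr a} = _
    ext x
    simp only [ih, Set.mem_sdiff, Set.mem_ofPred_eq, Set.mem_singleton_iff, List.mem_cons]
    grind

lemma SLfree_quantList_bindList_subset (l : List Ag) (θ : SLForm AP Ag (Var ⊕ Ag)) :
    SLfree (quantList l (bindList l θ)) ⊆ SLfree θ := by
  rw [SLfree_quantList]
  rintro x ⟨hx, hfresh⟩
  exact (SLfree_bindList l θ hx).resolve_left hfresh

variable [DecidableEq Ag]

mutual

theorem isLeft_of_mem_SLfree_trA :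
    ∀ (φ : BSLForm AP Ag (Var ⊕ Ag)) (A : Finset Ag), BSLavoidsFresh φ →
      ∀ x ∈ SLfree (trA A φ), x.isLeft
  | .atom _, _, _, _, hx => absurd hx (Set.notMem_empty _)
  | .neg φ, A, h, x, hx => isLeft_of_mem_SLfree_trA φ A h x hx
  | .or φ φ', A, h, x, hx =>
      hx.elim (isLeft_of_mem_SLfree_trA φ A h.1 x) (isLeft_of_mem_SLfree_trA φ' A h.2 x)
  | .exi _ φ, A, h, x, hx => isLeft_of_mem_SLfree_trA φ A h.2 x hx.1
  | .bind a _ φ, A, h, x, hx =>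
      hx.elim (fun hx => hx ▸ h.1) (isLeft_of_mem_SLfree_trA φ (A.erase a) h.2 x)
  | .unbind a φ, A, h, x, hx => isLeft_of_mem_SLfree_trA φ (insert a A) h x hx
  | .pathE ψ, A, h, x, hx =>
      isLeft_of_mem_SLfree_trAP ψ A h x (SLfree_quantList_bindList_subset _ _ hx)

theorem isLeft_of_mem_SLfree_trAP :
    ∀ (ψ : BSLPath AP Ag (Var ⊕ Ag)) (A : Finset Ag), BSLavoidsFreshP ψ →
      ∀ x ∈ SLfree (trAP A ψ), x.isLeft
  | .state φ, A, h, x, hx => isLeft_of_mem_SLfree_trA φ A h x hx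
  | .neg ψ, A, h, x, hx => isLeft_of_mem_SLfree_trAP ψ A h x hx
  | .or ψ ψ', A, h, x, hx =>
      hx.elim (isLeft_of_mem_SLfree_trAP ψ A h.1 x) (isLeft_of_mem_SLfree_trAP ψ' A h.2 x)
  | .next ψ, A, h, x, hx => isLeft_of_mem_SLfree_trAP ψ A h x hx
  | .untl ψ ψ', A, h, x, hx =>
      hx.elim (isLeft_of_mem_SLfree_trAP ψ A h.1 x) (isLeft_of_mem_SLfree_trAP ψ' A h.2 x)

end

end FreshVariables

section FreshQuantification

variable [DecidableEq Ag]

def setFresh (χ : Assign S Ag Act (Var ⊕ Ag)) (l : List Ag) (τ : Ag → Strat S Ag Act) :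
    Assign S Ag Act (Var ⊕ Ag)
  | .inr (.inr a) => if a ∈ l then some (τ a) else χ (.inr (.inr a))
  | x => χ x

def bindToFresh (χ : Assign S Ag Act (Var ⊕ Ag)) (l : List Ag) : Assign S Ag Act (Var ⊕ Ag)
  | .inl a => if a ∈ l then χ (.inr (.inr a)) else χ (.inl a)
  | x => χ x

def bindAgents (χ : Assign S Ag Act (Var ⊕ Ag)) (l : List Ag) (τ : Ag → Strat S Ag Act) :
    Assign S Ag Act (Var ⊕ Ag) :=
  bindToFresh (setFresh χ l τ) l

@[simp]
lemma bindAgents_inl (χ : Assign S Ag Act (Var ⊕ Ag)) (l : List Ag) (τ : Ag → Strat S Ag Act)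
    (a : Ag) : bindAgents χ l τ (.inl a) = if a ∈ l then some (τ a) else χ (.inl a) := by
  by_cases ha : a ∈ l <;> simp [bindAgents, bindToFresh, setFresh, ha]

@[simp]
lemma bindAgents_inr_inl (χ : Assign S Ag Act (Var ⊕ Ag)) (l : List Ag) (τ : Ag → Strat S Ag Act)
    (v : Var) : bindAgents χ l τ (.inr (.inl v)) = χ (.inr (.inl v)) := rfl

variable [DecidableEq Var]

lemma setFresh_cons (χ : Assign S Ag Act (Var ⊕ Ag)) (a : Ag) (l : List Ag)
    (τ : Ag → Strat S Ag Act) :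
    setFresh χ (a :: l) τ = setFresh (Function.update χ (.inr (.inr a)) (some (τ a))) l τ := by
  funext x
  rcases x with b | v | b
  · rfl
  · rfl
  · by_cases hb : b ∈ l <;> by_cases hba : b = a <;> simp [setFresh, hb, hba]

variable [DecidableEq S] (G : CGS S Ag Act AP)

lemma SLsat_bindList (θ : SLForm AP Ag (Var ⊕ Ag)) (q : S) (l : List Ag)
    (χ : Assign S Ag Act (Var ⊕ Ag)) :
    SLsat G χ q (bindList l θ) ↔ SLsat G (bindToFresh χ l) q θ := by
  induction l generalizing χ with
  | nil =>
    have : bindToFresh χ [] = χ := by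
      funext x; rcases x with a | x <;> simp [bindToFresh]
    rw [this]; rfl
  | cons a l ih =>
    have : bindToFresh (Function.update χ (.inl a) (χ (.inr (.inr a)))) l
        = bindToFresh χ (a :: l) := by
      funext x
      rcases x with b | x
      · by_cases hb : b ∈ l <;> by_cases hba : b = a <;> simp [bindToFresh, hb, hba]
      · simp [bindToFresh]
    exact (ih _).trans (by rw [this])

lemma SLsat_quantList (θ : SLForm AP Ag (Var ⊕ Ag)) (q : S) {l : List Ag} (hl : l.Nodup)
    (hne : l = [] → Nonempty (Ag → Strat S Ag Act)) (χ : Assign S Ag Act (Var ⊕ Ag)) :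
    SLsat G χ q (quantList l θ) ↔ ∃ τ, SLsat G (setFresh χ l τ) q θ := by
  induction l generalizing χ with
  | nil =>
    have hχ (τ : Ag → Strat S Ag Act) : setFresh χ [] τ = χ := by
      funext x; rcases x with a | v | a <;> rfl
    obtain ⟨τ⟩ := hne rfl
    simp only [hχ]
    exact ⟨fun h => ⟨τ, h⟩, fun ⟨_, h⟩ => h⟩
  | cons a l ih =>
    obtain ⟨hal, hl⟩ := List.nodup_cons.mp hl
    change (∃ σ, SLsat G _ q (quantList l θ)) ↔ _
    constructor
    · rintro ⟨σ, hσ⟩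
      obtain ⟨τ, hτ⟩ := (ih hl (fun _ => ⟨fun _ => σ⟩) _).mp hσ
      refine ⟨Function.update τ a σ, ?_⟩
      have hτσ : setFresh χ (a :: l) (Function.update τ a σ)
          = setFresh (Function.update χ (.inr (.inr a)) (some σ)) l τ := by
        rw [setFresh_cons, Function.update_self]
        funext x
        rcases x with b | v | b
        · rfl
        · rfl
        · by_cases hb : b ∈ l
          · simp [setFresh, hb, ne_of_mem_of_not_mem hb hal]
          · simp [setFresh, hb]
      rwa [hτσ]
    · rintro ⟨τ, hτ⟩
      rw [setFresh_cons] at hτ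
      exact ⟨τ a, (ih hl (fun _ => ⟨τ⟩) _).mpr ⟨τ, hτ⟩⟩

lemma SLsat_quantList_bindList (θ : SLForm AP Ag (Var ⊕ Ag)) (q : S) {l : List Ag}
    (hl : l.Nodup) (hne : l = [] → Nonempty (Ag → Strat S Ag Act))
    (χ : Assign S Ag Act (Var ⊕ Ag)) :
    SLsat G χ q (quantList l (bindList l θ)) ↔ ∃ τ, SLsat G (bindAgents χ l τ) q θ := by
  simp only [SLsat_quantList G _ q hl hne, SLsat_bindList, bindAgents]

end FreshQuantification

section Insensitivity

variable [DecidableEq S] [DecidableEq Ag] [DecidableEq Var] (G : CGS S Ag Act AP)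

/-- `tr_A φ` rebinds every agent of `A` before any temporal operator. -/
theorem SLsat_trA_congr :
    ∀ (φ : BSLForm AP Ag (Var ⊕ Ag)) (A : Finset Ag) {χ χ' : Assign S Ag Act (Var ⊕ Ag)} (q : S),
    BSLavoidsFresh φ → (∀ a ∉ A, χ (.inl a) = χ' (.inl a)) →
    (∀ v, χ (.inr (.inl v)) = χ' (.inr (.inl v))) →
    (SLsat G χ q (trA A φ) ↔ SLsat G χ' q (trA A φ))
  | .atom _, _, _, _, _, _, _, _ => Iff.rfl
  | .neg φ, A, _, _, q, h, hA, hV => not_congr (SLsat_trA_congr φ A q h hA hV)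
  | .or φ φ', A, _, _, q, h, hA, hV =>
      or_congr (SLsat_trA_congr φ A q h.1 hA hV) (SLsat_trA_congr φ' A q h.2 hA hV)
  | .exi x φ, A, _, _, q, h, hA, hV => exists_congr fun σ =>
      SLsat_trA_congr φ A q h.2 (fun a ha => by simp [hA a ha])
        (fun v => by by_cases hv : Sum.inl v = x <;> simp [hv, hV v])
  | .bind a x φ, A, _, _, q, h, hA, hV => by
      obtain ⟨v, rfl⟩ := Sum.isLeft_iff.mp h.1
      refine SLsat_trA_congr φ (A.erase a) q h.2 (fun b hb => ?_) (fun w => by simp [hV w])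
      by_cases hba : b = a
      · simp [hba, hV v]
      · simp [hba, hA b (by simpa [hba] using hb)]
  | .unbind a φ, A, _, _, q, h, hA, hV =>
      SLsat_trA_congr φ (insert a A) q h (fun b hb => hA b (by simp_all)) hV
  | .pathE ψ, A, χ, χ', q, h, hA, hV => by
      have hV' (x) (hx : x ∈ SLfree (trAP A ψ)) (χ χ' : Assign S Ag Act (Var ⊕ Ag))
          (hV : ∀ v, χ (.inr (.inl v)) = χ' (.inr (.inl v))) : χ (.inr x) = χ' (.inr x) := by
        obtain ⟨v, rfl⟩ := Sum.isLeft_iff.mp (isLeft_of_mem_SLfree_trAP ψ A h x hx)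
        exact hV v
      obtain hL | hL := eq_or_ne A.toList []
      · simp only [trA, hL, quantList, bindList, List.foldr_nil]
        exact SLsat_congr_of_eq G q (fun a => hA a (by simp [Finset.toList_eq_nil.mp hL]))
          (fun x hx => hV' x hx χ χ' hV)
      · rw [trA, SLsat_quantList_bindList G _ q A.nodup_toList (absurd · hL),
          SLsat_quantList_bindList G _ q A.nodup_toList (absurd · hL)]
        refine exists_congr fun τ => SLsat_congr_of_eq G q (fun a => ?_)
          (fun x hx => hV' x hx _ _ fun v => by simp [hV v])
        by_cases ha : a ∈ A <;> simp [ha, hA a]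

end Insensitivity

section UnboundAgents

variable [Fintype Ag]

/-- `Ag ∖ dom(χ)`. -/
def unboundAgents (χ : Assign S Ag Act Var) : Finset Ag :=
  Finset.univ.filter fun a => (χ (.inl a)).isNone

@[simp]
lemma mem_unboundAgents {χ : Assign S Ag Act Var} {a : Ag} :
    a ∈ unboundAgents χ ↔ χ (.inl a) = none := by
  simp [unboundAgents]

lemma unboundAgents_eq_empty {χ : Assign S Ag Act Var} :
    unboundAgents χ = ∅ ↔ χ.IsComplete := by
  simp [Finset.eq_empty_iff_forall_notMem, Assign.IsComplete, Option.isSome_iff_ne_none]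

@[simp]
lemma unboundAgents_transAssign [DecidableEq S] (G : CGS S Ag Act AP) (ρ : FPath S Ag Act)
    (χ : Assign S Ag Act Var) :
    unboundAgents (transAssign G ρ χ) = unboundAgents χ := by
  ext a; simp [transAssign]

variable [DecidableEq Ag] [DecidableEq Var]

@[simp]
lemma unboundAgents_update_inr (χ : Assign S Ag Act Var) (x : Var) (v : Option (Strat S Ag Act)) :
    unboundAgents (Function.update χ (.inr x) v) = unboundAgents χ := by
  ext a; simp

lemma unboundAgents_update_inl_some (χ : Assign S Ag Act Var) (a : Ag)
    {v : Option (Strat S Ag Act)} (hv : v.isSome) :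
    unboundAgents (Function.update χ (.inl a) v) = (unboundAgents χ).erase a := by
  ext b
  by_cases hba : b = a
  · simp [hba, Option.isSome_iff_ne_none.mp hv]
  · simp [hba]

@[simp]
lemma unboundAgents_update_inl_none (χ : Assign S Ag Act Var) (a : Ag) :
    unboundAgents (Function.update χ (.inl a) none) = insert a (unboundAgents χ) := by
  ext b
  by_cases hba : b = a <;> simp [hba]

end UnboundAgents

section Completion

variable (G : CGS S Ag Act AP)

structure IsCompletion (χ χ' : Assign S Ag Act (Var ⊕ Ag)) : Prop where
  isComplete : χ'.IsComplete
  inl_eq : ∀ a, (χ (.inl a)).isSome → χ' (.inl a) = χ (.inl a)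
  inr_inl_eq : ∀ v, χ' (.inr (.inl v)) = χ (.inr (.inl v))

lemma IsCompletion.outcome_subset {χ χ' : Assign S Ag Act (Var ⊕ Ag)} (h : IsCompletion χ χ')
    (q : S) : outcome G q χ' ⊆ outcome G q χ :=
  fun _ hd k a σ hσ => hd k a σ ((h.inl_eq a (by simp [hσ])).trans hσ)

variable [DecidableEq Ag]

lemma isCompletion_bindAgents [Fintype Ag] (χ : Assign S Ag Act (Var ⊕ Ag))
    (τ : Ag → Strat S Ag Act) :
    IsCompletion χ (bindAgents χ (unboundAgents χ).toList τ) where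
  isComplete a := by
    by_cases ha : χ (.inl a) = none <;> simp [ha, Option.isSome_iff_ne_none]
  inl_eq a ha := by simp [Option.isSome_iff_ne_none.mp ha]
  inr_inl_eq _ := rfl

lemma mem_outcome_bindAgents {χ : Assign S Ag Act (Var ⊕ Ag)} {q : S} {d : ℕ → Ag → Act}
    (hd : d ∈ outcome G q χ) (l : List Ag) :
    d ∈ outcome G q (bindAgents χ l fun a ρ => d ρ.2.length a) := by
  intro k a σ hσ
  by_cases ha : a ∈ l
  · simp only [bindAgents_inl, ha, if_true, Option.some.injEq] at hσ
    simp [← hσ]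
  · simp only [bindAgents_inl, ha, if_false] at hσ
    exact hd k a σ hσ

end Completion

lemma exists_until_iff_add (i : ℕ) (P Q : ℕ → Prop) :
    (∃ j, i ≤ j ∧ Q j ∧ ∀ k, i ≤ k → k < j → P k) ↔ ∃ j, Q (i + j) ∧ ∀ k < j, P (i + k) := by
  constructor
  · rintro ⟨j, hij, hQ, hP⟩
    refine ⟨j - i, by rwa [Nat.add_sub_cancel' hij], fun k hk => hP _ (by omega) (by omega)⟩
  · rintro ⟨j, hQ, hP⟩
    refine ⟨i + j, by omega, hQ, fun k hik hkj => ?_⟩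
    simpa [Nat.add_sub_cancel' hik] using hP (k - i) (by omega)

section Translation

variable [DecidableEq S] [DecidableEq Ag] [DecidableEq Var] [Fintype Ag] (G : CGS S Ag Act AP)

mutual

theorem BSLsat_iff_SLsat_trA :
    ∀ (φ : BSLForm AP Ag (Var ⊕ Ag)) (χ : Assign S Ag Act (Var ⊕ Ag)) (q : S),
    BSLavoidsFresh φ → (∀ x ∈ BSLfree φ, (χ (.inr x)).isSome) →
    (BSLsat G χ q φ ↔ SLsat G χ q (trA (unboundAgents χ) φ))
  | .atom _, _, _, _, _ => Iff.rfl
  | .neg φ, χ, q, h, hf => not_congr (BSLsat_iff_SLsat_trA φ χ q h hf)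
  | .or φ φ', χ, q, h, hf =>
      or_congr (BSLsat_iff_SLsat_trA φ χ q h.1 fun x hx => hf x (.inl hx))
        (BSLsat_iff_SLsat_trA φ' χ q h.2 fun x hx => hf x (.inr hx))
  | .exi x φ, χ, q, h, hf => exists_congr fun σ => by
      have hf' (y) (hy : y ∈ BSLfree φ) :
          (Function.update χ (.inr x) (some σ) (.inr y)).isSome := by
        by_cases hyx : y = x
        · simp [hyx]
        · simpa [hyx] using hf y ⟨hy, hyx⟩
      simpa using BSLsat_iff_SLsat_trA φ _ q h.2 hf'
  | .bind a x φ, χ, q, h, hf => by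
      have hf' (y) (hy : y ∈ BSLfree φ) :
          (Function.update χ (.inl a) (χ (.inr x)) (.inr y)).isSome := by
        simpa using hf y (Set.mem_insert_of_mem x hy)
      have hA := unboundAgents_update_inl_some χ a (hf x (Set.mem_insert x _))
      have := BSLsat_iff_SLsat_trA φ _ q h.2 hf'
      rwa [hA] at this
  | .unbind a φ, χ, q, h, hf => by
      have hf' (y) (hy : y ∈ BSLfree φ) : (Function.update χ (.inl a) none (.inr y)).isSome := by
        simpa using hf y hy
      refine (BSLsat_iff_SLsat_trA φ _ q h hf').trans ?_
      rw [unboundAgents_update_inl_none]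
      refine SLsat_trA_congr G φ _ q h (fun b hb => ?_) (fun v => by simp)
      simp [show b ≠ a by rintro rfl; simp at hb]
  | .pathE ψ, χ, q, h, hf => by
      have hne (hA : (unboundAgents χ).toList = []) : Nonempty (Ag → Strat S Ag Act) := by
        have hχ := unboundAgents_eq_empty.mp (Finset.toList_eq_nil.mp hA)
        exact ⟨fun a => (χ (.inl a)).get (hχ a)⟩
      rw [BSLsat, trA, SLsat_quantList_bindList G _ q (Finset.nodup_toList _) hne]
      constructor
      · rintro ⟨d, hd, hψ⟩
        refine ⟨fun a ρ => d ρ.2.length a, ?_⟩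
        simpa using (BSLsatP_iff_SLsat_trAP ψ χ _ q d 0 h hf (isCompletion_bindAgents χ _)
          (mem_outcome_bindAgents G hd _)).mp hψ
      · rintro ⟨τ, hτ⟩
        have hc := isCompletion_bindAgents χ τ
        obtain ⟨d, hd⟩ := outcome_nonempty G hc.isComplete q
        exact ⟨d, hc.outcome_subset G q hd,
          (BSLsatP_iff_SLsat_trAP ψ χ _ q d 0 h hf hc hd).mpr (by simpa using hτ)⟩

theorem BSLsatP_iff_SLsat_trAP :
    ∀ (ψ : BSLPath AP Ag (Var ⊕ Ag)) (χ χ' : Assign S Ag Act (Var ⊕ Ag)) (q : S)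
      (d : ℕ → Ag → Act) (i : ℕ),
    BSLavoidsFreshP ψ → (∀ x ∈ BSLfreeP ψ, (χ (.inr x)).isSome) →
    IsCompletion χ χ' → d ∈ outcome G q χ' →
    (BSLsatP G χ q d i ψ ↔
      SLsat G (transAssign G (prefixPath q d i) χ') (stateAt G q d i) (trAP (unboundAgents χ) ψ))
  | .state φ, χ, χ', q, d, i, h, hf, hχ', _ => by
      refine (BSLsat_iff_SLsat_trA φ _ _ h fun x hx => by simpa using hf x hx).trans ?_
      rw [unboundAgents_transAssign]
      refine SLsat_trA_congr G φ _ _ h (fun a ha => ?_)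
        (fun v => by simp [transAssign, hχ'.inr_inl_eq])
      have ha : (χ (.inl a)).isSome := by simpa [Option.isSome_iff_ne_none] using ha
      simp [transAssign, hχ'.inl_eq a ha]
  | .neg ψ, χ, χ', q, d, i, h, hf, hχ', hd =>
      not_congr (BSLsatP_iff_SLsat_trAP ψ χ χ' q d i h hf hχ' hd)
  | .or ψ ψ', χ, χ', q, d, i, h, hf, hχ', hd =>
      or_congr (BSLsatP_iff_SLsat_trAP ψ χ χ' q d i h.1 (fun x hx => hf x (.inl hx)) hχ' hd)
        (BSLsatP_iff_SLsat_trAP ψ' χ χ' q d i h.2 (fun x hx => hf x (.inr hx)) hχ' hd)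
  | .next ψ, χ, χ', q, d, i, h, hf, hχ', hd => by
      rw [BSLsatP, trAP, SLsat, exists_mem_outcome_transAssign_iff G hχ'.isComplete hd,
        SLsat_transAssign_shift]
      exact BSLsatP_iff_SLsat_trAP ψ χ χ' q d (i + 1) h hf hχ' hd
  | .untl ψ ψ', χ, χ', q, d, i, h, hf, hχ', hd => by
      rw [BSLsatP, trAP, SLsat, exists_mem_outcome_transAssign_iff G hχ'.isComplete hd]
      simp only [SLsat_transAssign_shift]
      rw [exists_until_iff_add]
      refine exists_congr fun j => and_congr ?_ ?_
      · exact BSLsatP_iff_SLsat_trAP ψ' χ χ' q d (i + j) h.2 (fun x hx => hf x (.inr hx)) hχ' hd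
      · exact forall₂_congr fun k _ =>
          BSLsatP_iff_SLsat_trAP ψ χ χ' q d (i + k) h.1 (fun x hx => hf x (.inl hx)) hχ' hd

end

end Translation

/-- `G, χ, q ⊨_BSL φ` iff `G, χ, q ⊨_SL tr_{Ag ∖ dom(χ)}(φ)`. -/
theorem statement_7 [DecidableEq S] [DecidableEq Ag] [DecidableEq Var] [Fintype Ag]
    (G : CGS S Ag Act AP) (q : S)
    (φ : BSLForm AP Ag (Var ⊕ Ag)) (havoid : BSLavoidsFresh φ)
    (χ : Assign S Ag Act (Var ⊕ Ag))
    (hfor : ∀ x ∈ BSLfree φ, (χ (Sum.inr x)).isSome) :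
    BSLsat G χ q φ ↔
      SLsat G χ q (trA (Finset.univ.filter fun a => (χ (Sum.inl a)).isNone) φ) :=
  BSLsat_iff_SLsat_trA G φ χ q havoid hfor
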